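/- arXiv:1110.4093 — 3 statements merged into one kernel-verified Lean document; each statement's English description precedes it below -/
import Mathlib

section
/- Let u, v be elements of ℤ² and let t_u, t_v ∈ SL(2,ℤ) be the corresponding symplectic transvections, t_w : x ↦ x + (w ∧ x)·w where ∧ is the standard symplectic form with (1,0) ∧ (0,1) = 1. Then t_u and t_v generate SL(2,ℤ) if and only if u and v span ℤ² (form a ℤ-basis). -/
abbrev SL2Z := Matrix.SpecialLinearGroup (Fin 2) ℤ

/-- The standard symplectic form on `ℤ²` with `(1,0) ∧ (0,1) = 1`. -/
def symp (u v : Fin 2 → ℤ) : ℤ := u 0 * v 1 - u 1 * v 0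

/-- The symplectic transvection (Dehn twist) `t_w : x ↦ x + (w ∧ x)·w`, as an
element of `SL(2,ℤ)` acting on row vectors by right multiplication. -/
def twist (w : Fin 2 → ℤ) : SL2Z :=
  ⟨!![1 - w 0 * w 1, -(w 1) ^ 2; (w 0) ^ 2, 1 + w 0 * w 1], by
    simp [Matrix.det_fin_two_of]; ring⟩

/-- The transvection `twist w` indeed acts on row vectors by `x ↦ x + (w ∧ x)·w`. -/
theorem twist_vecMul (w x : Fin 2 → ℤ) :
    Matrix.vecMul x (twist w : Matrix (Fin 2) (Fin 2) ℤ) = x + symp w x • w := by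
  funext i
  fin_cases i <;>
    simp [twist, symp, Matrix.vecMul, dotProduct, Fin.sum_univ_two] <;> ring

/-!
Conjugation transports twists: `g⁻¹ t_w g = t_{w g}` for `g ∈ SL(2,ℤ)`, because `g` preserves
the symplectic form. If `u, v` span `ℤ²` then `u ∧ v = ±1`, so after possibly swapping them
`(u, v)` is the image of the standard basis `(e₁, e₂)` under some `g ∈ SL(2,ℤ)`, and `t_u, t_v`
are conjugate to `t_{e₁}, t_{e₂}`; these generate `SL(2,ℤ)` since `T = t_{e₂}⁻¹` and
`S = t_{e₂} t_{e₁} t_{e₂}`. Conversely `t_w` moves every vector by a multiple of `w`, so every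
element of `⟨t_u, t_v⟩` acts trivially on `ℤ² ⧸ span {u, v}`; if that is all of `SL(2,ℤ)`, then
`t_{e₁}` and `t_{e₂}` put `e₁, e₂` into the span.
-/

open Matrix ModularGroup

lemma symp_eq_det (u v : Fin 2 → ℤ) : symp u v = (of ![u, v]).det := by
  simp [symp, det_fin_two]

lemma symp_swap (u v : Fin 2 → ℤ) : symp v u = -symp u v := by
  simp only [symp]; ring

lemma symp_vecMul_vecMul (g : SL2Z) (u v : Fin 2 → ℤ) :
    symp (u ᵥ* g) (v ᵥ* g) = symp u v := by
  have : of ![u ᵥ* (g : Matrix (Fin 2) (Fin 2) ℤ), v ᵥ* g] = of ![u, v] * g := by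
    ext i j; fin_cases i <;> simp [mul_apply, vecMul, dotProduct]
  rw [symp_eq_det, symp_eq_det, this, det_mul, g.2, mul_one]

lemma twist_vecMul_eq_conj (w : Fin 2 → ℤ) (g : SL2Z) :
    twist (w ᵥ* g) = g⁻¹ * twist w * g := by
  rw [mul_assoc, eq_inv_mul_iff_mul_eq]
  refine Subtype.val_injective (ext_iff_vecMul.2 fun x => ?_)
  simp only [Matrix.SpecialLinearGroup.coe_mul, ← vecMul_vecMul, twist_vecMul, add_vecMul,
    smul_vecMul, symp_vecMul_vecMul]

lemma S_eq_twist_mul_twist_mul_twist : S = twist ![0, 1] * twist ![1, 0] * twist ![0, 1] := by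
  decide

lemma T_inv_eq_twist : T⁻¹ = twist ![0, 1] := by
  decide

lemma closure_twist_basis_eq_top : Subgroup.closure {twist ![1, 0], twist ![0, 1]} = ⊤ := by
  set H := Subgroup.closure {twist ![1, 0], twist ![0, 1]}
  have h₀ : twist ![1, 0] ∈ H := Subgroup.subset_closure (by simp)
  have h₁ : twist ![0, 1] ∈ H := Subgroup.subset_closure (by simp)
  rw [eq_top_iff, ← SpecialLinearGroup.SL2Z_generators, Subgroup.closure_le]
  rintro _ (rfl | rfl)
  · rw [S_eq_twist_mul_twist_mul_twist]; exact mul_mem (mul_mem h₁ h₀) h₁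
  · rw [← inv_inv T, T_inv_eq_twist]; exact inv_mem h₁

lemma closure_twist_eq_top_of_symp_eq_one {u v : Fin 2 → ℤ} (h : symp u v = 1) :
    Subgroup.closure {twist u, twist v} = ⊤ := by
  let g : SL2Z := ⟨of ![u, v], by rw [← symp_eq_det, h]⟩
  have hu : twist u = MulAut.conj g⁻¹ (twist ![1, 0]) := by
    rw [MulAut.conj_apply, inv_inv, ← twist_vecMul_eq_conj]
    congr; ext j; simp [g, vecMul, dotProduct]
  have hv : twist v = MulAut.conj g⁻¹ (twist ![0, 1]) := by
    rw [MulAut.conj_apply, inv_inv, ← twist_vecMul_eq_conj]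
    congr; ext j; simp [g, vecMul, dotProduct]
  rw [hu, hv, ← Set.image_pair, ← MulEquiv.coe_toMonoidHom, ← MonoidHom.map_closure,
    closure_twist_basis_eq_top]
  exact Subgroup.map_top_of_surjective _ (MulAut.conj g⁻¹).surjective

lemma vecMul_surjective_of_span_eq_top {R : Type*} [CommRing R] {u v : Fin 2 → R}
    (h : Submodule.span R ({u, v} : Set (Fin 2 → R)) = ⊤) :
    Function.Surjective (of ![u, v]).vecMul := by
  intro x
  have hx : x ∈ Submodule.span R ({u, v} : Set (Fin 2 → R)) := h ▸ Submodule.mem_top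
  obtain ⟨a, b, rfl⟩ := Submodule.mem_span_pair.1 hx
  exact ⟨![a, b], by ext j; simp [vecMul, dotProduct]⟩

lemma isUnit_symp_of_span_eq_top {u v : Fin 2 → ℤ}
    (h : Submodule.span ℤ ({u, v} : Set (Fin 2 → ℤ)) = ⊤) : IsUnit (symp u v) := by
  rw [symp_eq_det, ← isUnit_iff_isUnit_det, ← vecMul_surjective_iff_isUnit]
  exact vecMul_surjective_of_span_eq_top h

section
variable {n R : Type*} [Fintype n] [DecidableEq n] [CommRing R]

/-- The elements of `SL(n, R)` acting trivially on `(n → R) ⧸ M`. -/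
def trivialModSubgroup (M : Submodule R (n → R)) : Subgroup (SpecialLinearGroup n R) where
  carrier := {g | ∀ x, x ᵥ* (g : Matrix n n R) - x ∈ M}
  one_mem' x := by simp
  mul_mem' {a b} ha hb x := by
    set y := x ᵥ* (a : Matrix n n R)
    have : x ᵥ* ((a * b : SpecialLinearGroup n R) : Matrix n n R) - x =
        (y ᵥ* (b : Matrix n n R) - y) + (y - x) := by
      rw [Matrix.SpecialLinearGroup.coe_mul, ← vecMul_vecMul]; abel
    rw [this]; exact add_mem (hb _) (ha _)
  inv_mem' {a} ha x := by
    set y := x ᵥ* ((a⁻¹ : SpecialLinearGroup n R) : Matrix n n R)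
    have : y - x = -(y ᵥ* (a : Matrix n n R) - y) := by
      rw [vecMul_vecMul, ← Matrix.SpecialLinearGroup.coe_mul, inv_mul_cancel,
        Matrix.SpecialLinearGroup.coe_one, vecMul_one, neg_sub]
    rw [this]; exact neg_mem (ha _)

end

lemma twist_mem_trivialModSubgroup_iff {M : Submodule ℤ (Fin 2 → ℤ)} {w : Fin 2 → ℤ} :
    twist w ∈ trivialModSubgroup M ↔ ∀ x, symp w x • w ∈ M := by
  change (∀ x, x ᵥ* (twist w : Matrix (Fin 2) (Fin 2) ℤ) - x ∈ M) ↔ _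
  simp only [twist_vecMul, add_sub_cancel_left]

lemma span_eq_top_of_closure_twist_eq_top {u v : Fin 2 → ℤ}
    (h : Subgroup.closure {twist u, twist v} = ⊤) :
    Submodule.span ℤ ({u, v} : Set (Fin 2 → ℤ)) = ⊤ := by
  set M := Submodule.span ℤ ({u, v} : Set (Fin 2 → ℤ))
  have hle : Subgroup.closure {twist u, twist v} ≤ trivialModSubgroup M := by
    rw [Subgroup.closure_le]
    rintro _ (rfl | rfl) <;> refine twist_mem_trivialModSubgroup_iff.2 fun x => ?_ <;>
      exact M.smul_mem _ (Submodule.subset_span (by simp))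
  rw [h] at hle
  have hsymp (w x : Fin 2 → ℤ) : symp w x • w ∈ M :=
    twist_mem_trivialModSubgroup_iff.1 (hle (Subgroup.mem_top (twist w))) x
  have h₀ : ![1, 0] ∈ M := by simpa [symp] using hsymp ![1, 0] ![0, 1]
  have h₁ : ![0, 1] ∈ M := by simpa [symp] using hsymp ![0, 1] ![-1, 0]
  refine eq_top_iff.2 fun x _ => ?_
  have hx : x = x 0 • ![1, 0] + x 1 • ![0, 1] := by ext j; fin_cases j <;> simp
  rw [hx]
  exact add_mem (M.smul_mem _ h₀) (M.smul_mem _ h₁)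

/-- `t_u` and `t_v` generate `SL(2,ℤ)` if and only if `u` and `v` span `ℤ²`. -/
theorem twists_generate_iff_span (u v : Fin 2 → ℤ) :
    Subgroup.closure {twist u, twist v} = (⊤ : Subgroup SL2Z) ↔
      Submodule.span ℤ ({u, v} : Set (Fin 2 → ℤ)) = ⊤ := by
  refine ⟨span_eq_top_of_closure_twist_eq_top, fun h => ?_⟩
  rcases Int.isUnit_iff.1 (isUnit_symp_of_span_eq_top h) with h₁ | h₁
  · exact closure_twist_eq_top_of_symp_eq_one h₁
  · rw [Set.pair_comm]
    exact closure_twist_eq_top_of_symp_eq_one (by rw [symp_swap, h₁, neg_neg])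
end

section
/- Let G = ⟨α, β⟩ be a free group of rank 2 on generators α and β. Suppose α', β' ∈ G generate G and each of α', β' is conjugate in G to α or to β. Then the pair (α', β') can be transformed into (α, β) by a finite sequence of Hurwitz moves and a global conjugation; that is, there exists g ∈ G such that (g⁻¹α'g, g⁻¹β'g) is obtained from (α, β) by a sequence of moves of the form (a,b) ↦ (aba⁻¹, a) and their inverses. -/
/-!
Write `α' = u α u⁻¹` and `β' = v β v⁻¹` (both being conjugate to the same generator is
excluded by abelianising). Conjugating by `u⁻¹`, the elements `α` and `w β w⁻¹` with
`w = u⁻¹ v` generate `F₂`. Stripping `α`-letters from the front of `w` and `β`-letters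
from its end does not change the subgroup `⟨α, w β w⁻¹⟩`, so either `w = αᵐ βⁿ`, and then
conjugation by `u αᵐ` carries `(α', β')` to `(α, β)`, or the reduced word of `w` starts
with a `β`-letter and does not end with one. In the latter case the Stallings graph of
`⟨α, w β w⁻¹⟩` (a path spelling `w` with an `α`-loop at its start and a `β`-loop at its
end) is folded; completing it to a permutation action on its vertices, the subgroup fixes
the base point while `β` moves it, a contradiction. When `α'` is conjugate to `β` and `β'`
to `α`, the same argument yields the pair `(β, α)`, which is conjugate to the inverse
Hurwitz move `(β, β⁻¹ α β)` of `(α, β)`.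
-/

/-- The Hurwitz move on a pair: `(a, b) ↦ (aba⁻¹, a)`. -/
def hurwitz {G : Type*} [Group G] (p : G × G) : G × G :=
  (p.1 * p.2 * p.1⁻¹, p.1)

/-- One step of Hurwitz equivalence: a Hurwitz move or its inverse. -/
def hurwitzStep {G : Type*} [Group G] (p q : G × G) : Prop :=
  q = hurwitz p ∨ p = hurwitz q

theorem hurwitzStep_conj_of_conj_eq_swap {G : Type*} [Group G] {a b x y g : G}
    (ha : g⁻¹ * a * g = y) (hb : g⁻¹ * b * g = x) :
    hurwitzStep (x, y) ((g * y)⁻¹ * a * (g * y), (g * y)⁻¹ * b * (g * y)) := by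
  subst ha hb
  exact Or.inr <| Prod.ext (by simp only [hurwitz]; group) (by simp only [hurwitz]; group)

theorem Set.InjOn.exists_perm_eqOn {V : Type*} [Finite V] {s : Set V} {f : V → V}
    (hf : s.InjOn f) : ∃ σ : Equiv.Perm V, s.EqOn σ f := by
  have := Fintype.ofFinite V
  obtain ⟨g, hg⟩ := Set.MapsTo.exists_equiv_extend_of_card_eq (t := Finset.univ) (by simp)
    (fun _ _ => Finset.mem_coe.2 (Finset.mem_univ _)) hf
  exact ⟨g.trans (Equiv.subtypeUnivEquiv Finset.mem_univ), hg⟩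

theorem Relator.BiUnique.exists_perm {V : Type*} [Finite V] {R : V → V → Prop}
    (hR : Relator.BiUnique R) : ∃ σ : Equiv.Perm V, ∀ u v, R u v → σ u = v := by
  classical
  let f : V → V := fun u => if h : ∃ v, R u v then h.choose else u
  have hf : ∀ u v, R u v → f u = v := fun u v huv => by
    have h : ∃ v, R u v := ⟨v, huv⟩
    simpa [f, h] using hR.2 h.choose_spec huv
  obtain ⟨σ, hσ⟩ := Set.InjOn.exists_perm_eqOn (s := {u | ∃ v, R u v}) (f := f)
    fun u ⟨v, hv⟩ u' ⟨v', hv'⟩ huu' =>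
      hR.1 hv (by rwa [← hf u v hv, huu', hf u' v' hv'])
  exact ⟨σ, fun u v huv => (hσ ⟨v, huv⟩).trans (hf u v huv)⟩

theorem Subgroup.closure_pair_conj_of_mem_zpowers {G : Type*} [Group G] {a u : G}
    (hu : u ∈ Subgroup.zpowers a) (c : G) :
    Subgroup.closure {a, u * c * u⁻¹} = Subgroup.closure {a, c} := by
  have conj_le : ∀ (k : ℤ) (c : G),
      Subgroup.closure {a, a ^ k * c * (a ^ k)⁻¹} ≤ Subgroup.closure {a, c} := by
    intro k c
    have ha : a ∈ Subgroup.closure {a, c} := Subgroup.subset_closure (by simp)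
    have hc : c ∈ Subgroup.closure {a, c} := Subgroup.subset_closure (by simp)
    rw [Subgroup.closure_le]
    rintro _ (rfl | rfl)
    · exact ha
    · exact mul_mem (mul_mem (zpow_mem ha k) hc) (inv_mem (zpow_mem ha k))
  obtain ⟨k, rfl⟩ := Subgroup.mem_zpowers_iff.1 hu
  refine le_antisymm (conj_le k c) ?_
  calc Subgroup.closure {a, c}
      = Subgroup.closure {a, a ^ (-k) * (a ^ k * c * (a ^ k)⁻¹) * (a ^ (-k))⁻¹} := by group
    _ ≤ _ := conj_le (-k) _

namespace FreeGroup

variable {α : Type*}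

theorem mk_singleton_false (a : α) : mk [(a, false)] = (of a)⁻¹ := by
  rw [show of a = mk [(a, true)] from rfl, inv_mk]
  rfl

theorem mk_singleton_mem_zpowers (a : α) (b : Bool) :
    mk [(a, b)] ∈ Subgroup.zpowers (of a) := by
  cases b
  · rw [mk_singleton_false]
    exact inv_mem (Subgroup.mem_zpowers _)
  · exact Subgroup.mem_zpowers _

theorem IsReduced.getElem?_succ_ne {L : List (α × Bool)} (hL : IsReduced L) {j : ℕ} {a : α}
    {b : Bool} (h : L[j]? = some (a, b)) : L[j + 1]? ≠ some (a, !b) := by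
  intro h'
  obtain ⟨hj', hLj'⟩ := List.getElem?_eq_some_iff.1 h'
  have hLj : L[j] = (a, b) := by
    simpa [List.getElem?_eq_getElem (Nat.lt_of_succ_lt hj')] using h
  have := hL.getElem j hj'
  simp_all

theorem closure_pair_ne_top_of_isConj [Nontrivial α] {x : α} {a b : FreeGroup α}
    (ha : IsConj (of x) a) (hb : IsConj (of x) b) : Subgroup.closure {a, b} ≠ ⊤ := by
  classical
  obtain ⟨y, hy⟩ := exists_ne x
  let φ : FreeGroup α →* Multiplicative ℤ :=
    FreeGroup.lift fun z => if z = x then 1 else Multiplicative.ofAdd 1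
  have hker : ∀ {c}, IsConj (of x) c → c ∈ φ.ker := fun hc =>
    isConj_one_right.1 (by simpa [φ] using φ.map_isConj hc)
  intro htop
  have hle : Subgroup.closure {a, b} ≤ φ.ker := by
    rw [Subgroup.closure_le]
    rintro _ (rfl | rfl)
    exacts [hker ha, hker hb]
  have := hle (htop ▸ Subgroup.mem_top (of y))
  simp [φ, hy] at this

theorem exists_hom_perm_of_rightUnique {V : Type*} [Finite V]
    {E : α × Bool → V → V → Prop} (hE : ∀ p, Relator.RightUnique (E p))
    (hflip : ∀ a, E (a, false) = flip (E (a, true))) :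
    ∃ φ : FreeGroup α →* Equiv.Perm V, ∀ p u v, E p u v → φ (mk [p]) u = v := by
  choose σ hσ using fun a => Relator.BiUnique.exists_perm (R := E (a, true))
    ⟨fun _ _ _ h h' => hE (a, false) (by rwa [hflip]) (by rwa [hflip]), hE (a, true)⟩
  refine ⟨FreeGroup.lift σ, fun ⟨a, b⟩ u v huv => ?_⟩
  cases b
  · rw [mk_singleton_false, _root_.map_inv, lift_apply_of, Equiv.Perm.inv_eq_iff_eq]
    exact (hσ a v u (by rwa [hflip] at huv)).symm
  · exact hσ a u v huv

theorem mk_apply_length_eq_of_chain {V : Type*} (φ : FreeGroup α →* Equiv.Perm V) :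
    ∀ (L : List (α × Bool)) (p : ℕ → V),
      (∀ j (hj : j < L.length), φ (mk [L[j]]) (p (j + 1)) = p j) → φ (mk L) (p L.length) = p 0
  | [], p, _ => by simp [← one_eq_mk]
  | q :: L, p, h => by
    have ih := mk_apply_length_eq_of_chain φ L (fun j => p (j + 1))
      fun j hj => h (j + 1) (by simpa using hj)
    have hmk : mk (q :: L) = mk [q] * mk L := by rw [mul_mk, List.singleton_append]
    rw [hmk, _root_.map_mul, Equiv.Perm.mul_apply, List.length_cons, ih]
    exact h 0 (by simp)

/-- The path graph spelling `L` from right to left: the letter `L[j]` leads from `j + 1`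
to `j`. -/
def wordEdge (L : List (α × Bool)) (p : α × Bool) (u v : ℕ) : Prop :=
  (u = v + 1 ∧ L[v]? = some p) ∨ (v = u + 1 ∧ L[u]? = some (p.1, !p.2))

theorem wordEdge_false (L : List (α × Bool)) (a : α) :
    wordEdge L (a, false) = flip (wordEdge L (a, true)) := by
  funext u v
  simp only [wordEdge, flip, Bool.not_false, Bool.not_true]
  exact propext or_comm

theorem wordEdge_rightUnique {L : List (α × Bool)} (hL : IsReduced L) (p : α × Bool) :
    Relator.RightUnique (wordEdge L p) := by
  obtain ⟨a, b⟩ := p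
  rintro u v v' (⟨rfl, hv⟩ | ⟨rfl, hu⟩) (⟨huv', hv'⟩ | ⟨rfl, hu'⟩)
  · omega
  · exact absurd hu' (hL.getElem?_succ_ne hv)
  · exact absurd (huv' ▸ hu) (hL.getElem?_succ_ne hv')
  · rfl

theorem head?_eq_of_wordEdge_zero {L : List (α × Bool)} {p : α × Bool} {v : ℕ}
    (h : wordEdge L p 0 v) : L.head? = some (p.1, !p.2) := by
  rcases h with ⟨h, _⟩ | ⟨_, h⟩
  · omega
  · rwa [List.head?_eq_getElem?]

theorem getLast?_eq_of_wordEdge_length {L : List (α × Bool)} {p : α × Bool} {v : ℕ}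
    (h : wordEdge L p L.length v) : L.getLast? = some p := by
  rcases h with ⟨h, hv⟩ | ⟨_, h⟩
  · rwa [List.getLast?_eq_getElem?, h]
  · simp at h

/-- The Stallings graph of `⟨of x, mk L * of y * (mk L)⁻¹⟩` with base point `0`. -/
def stallingsEdge (L : List (α × Bool)) (x y : α) (p : α × Bool) (u v : ℕ) : Prop :=
  wordEdge L p u v ∨ (p.1 = x ∧ u = 0 ∧ v = 0) ∨ (p.1 = y ∧ u = L.length ∧ v = L.length)

theorem stallingsEdge_false (L : List (α × Bool)) (x y a : α) :
    stallingsEdge L x y (a, false) = flip (stallingsEdge L x y (a, true)) := by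
  funext u v
  simp only [stallingsEdge, wordEdge_false, flip]
  exact propext (by tauto)

theorem stallingsEdge_rightUnique {L : List (α × Bool)} (hL : IsReduced L) {x y : α}
    (hhead : ∀ b, L.head? ≠ some (x, b)) (hlast : ∀ b, L.getLast? ≠ some (y, b))
    (p : α × Bool) : Relator.RightUnique (stallingsEdge L x y p) := by
  have not_loop : ∀ {u v v'}, wordEdge L p u v →
      ¬ ((p.1 = x ∧ u = 0 ∧ v' = 0) ∨ (p.1 = y ∧ u = L.length ∧ v' = L.length)) := by
    rintro u v v' h (⟨rfl, rfl, -⟩ | ⟨rfl, rfl, -⟩)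
    · exact hhead _ (head?_eq_of_wordEdge_zero h)
    · exact hlast _ (getLast?_eq_of_wordEdge_length h)
  rintro u v v' (h | h) (h' | h')
  · exact wordEdge_rightUnique hL p h h'
  · exact absurd h' (not_loop h)
  · exact absurd h (not_loop h')
  · omega

theorem of_notMem_closure_pair_conj {x y : α} (hxy : x ≠ y)
    {L : List (α × Bool)} (hL : IsReduced L) {s : Bool} (hhead : L.head? = some (y, s))
    (hlast : ∀ b, L.getLast? ≠ some (y, b)) :
    of y ∉ Subgroup.closure {of x, mk L * of y * (mk L)⁻¹} := by
  have hn : 0 < L.length := by cases L <;> simp_all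
  set n := L.length
  let vert (j : ℕ) : Fin (n + 1) := ⟨min j n, by omega⟩
  have hvert : ∀ {j}, j ≤ n → (vert j : ℕ) = j := fun hj => min_eq_left hj
  obtain ⟨φ, hφ⟩ := exists_hom_perm_of_rightUnique
    (E := fun p (u v : Fin (n + 1)) => stallingsEdge L x y p u v)
    (fun p _ _ _ h h' => Fin.ext <| stallingsEdge_rightUnique hL
      (fun b h => hxy (by simp [hhead] at h; exact h.1.symm)) hlast p h h')
    (fun a => by funext u v; exact congrFun₂ (stallingsEdge_false L x y a) u v)
  have hstep : ∀ j (hj : j < n), φ (mk [L[j]]) (vert (j + 1)) = vert j := fun j hj =>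
    hφ _ _ _ (Or.inl (Or.inl ⟨by rw [hvert hj, hvert hj.le], by rw [hvert hj.le]; simp⟩))
  have hpath : φ (mk L) (vert n) = 0 := mk_apply_length_eq_of_chain φ L vert hstep
  have hx : φ (of x) 0 = 0 := hφ (x, true) 0 0 (Or.inr (Or.inl ⟨rfl, rfl, rfl⟩))
  have hy : φ (of y) (vert n) = vert n :=
    hφ (y, true) _ _ (Or.inr (Or.inr ⟨rfl, hvert le_rfl, hvert le_rfl⟩))
  let H := (MulAction.stabilizer (Equiv.Perm (Fin (n + 1))) (0 : Fin (n + 1))).comap φ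
  have hle : Subgroup.closure {of x, mk L * of y * (mk L)⁻¹} ≤ H := by
    rw [Subgroup.closure_le]
    rintro _ (rfl | rfl)
    · exact hx
    · change φ (mk L * of y * (mk L)⁻¹) 0 = 0
      rw [_root_.map_mul, _root_.map_mul, _root_.map_inv, Equiv.Perm.mul_apply,
        Equiv.Perm.mul_apply, Equiv.Perm.inv_eq_iff_eq.2 hpath.symm, hy, hpath]
  -- `H` fixes the base point `0`, but the first letter of `L`, a power of `of y`, moves `1` to `0`.
  intro hyH
  have h0 : L[0] = (y, s) := by
    simpa [List.head?_eq_getElem?, List.getElem?_eq_getElem hn] using hhead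
  have hfix : φ (mk [L[0]]) 0 = 0 := by
    rw [h0]
    exact (Subgroup.zpowers_le.2 (hle hyH)) (mk_singleton_mem_zpowers y s)
  have h10 := congrArg Fin.val ((φ (mk [L[0]])).injective (hfix.trans (hstep 0 hn).symm))
  simp only [vert, Fin.val_zero] at h10
  omega

theorem exists_eq_zpow_mul_zpow_of_mem_closure {x y : Fin 2} (hxy : x ≠ y) :
    ∀ L : List (Fin 2 × Bool), IsReduced L →
      of y ∈ Subgroup.closure {of x, mk L * of y * (mk L)⁻¹} →
      ∃ m n : ℤ, mk L = of x ^ m * of y ^ n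
  | [], _, _ => ⟨0, 0, by simp [← one_eq_mk]⟩
  | (z, b) :: L', hL, h => by
    by_cases hzx : z = x
    · subst z
      obtain ⟨k, hk⟩ := Subgroup.mem_zpowers_iff.1 (mk_singleton_mem_zpowers x b)
      have hmk : mk ((x, b) :: L') = of x ^ k * mk L' := by
        rw [hk, mul_mk, List.singleton_append]
      rw [hmk, show of x ^ k * mk L' * of y * (of x ^ k * mk L')⁻¹ =
          of x ^ k * (mk L' * of y * (mk L')⁻¹) * (of x ^ k)⁻¹ by group,
        Subgroup.closure_pair_conj_of_mem_zpowers (Subgroup.mem_zpowers_iff.2 ⟨k, rfl⟩)] at h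
      obtain ⟨m, n, hmn⟩ :=
        exists_eq_zpow_mul_zpow_of_mem_closure hxy L' (hL.infix (List.suffix_cons _ _).isInfix) h
      exact ⟨k + m, n, by rw [hmk, hmn, zpow_add]; group⟩
    by_cases hlast : ∀ b', ((z, b) :: L').getLast? ≠ some (y, b')
    · obtain rfl : z = y := by omega
      exact absurd h (of_notMem_closure_pair_conj hxy hL rfl hlast)
    push Not at hlast
    obtain ⟨b', hb'⟩ := hlast
    obtain ⟨L'', hL''⟩ := List.getLast?_eq_some_iff.1 hb'
    rw [hL''] at hL h ⊢
    obtain ⟨k, hk⟩ := Subgroup.mem_zpowers_iff.1 (mk_singleton_mem_zpowers y b')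
    have hmk : mk (L'' ++ [(y, b')]) = mk L'' * of y ^ k := by rw [hk, mul_mk]
    rw [hmk, show mk L'' * of y ^ k * of y * (mk L'' * of y ^ k)⁻¹ =
      mk L'' * of y * (mk L'')⁻¹ by group] at h
    obtain ⟨m, n, hmn⟩ :=
      exists_eq_zpow_mul_zpow_of_mem_closure hxy L'' (hL.infix (List.prefix_append _ _).isInfix) h
    exact ⟨m, n + k, by rw [hmk, hmn, zpow_add]; group⟩
termination_by L => L.length
decreasing_by
  · simp
  · simpa using (congrArg List.length hL'').ge

theorem exists_conj_eq_of_closure_eq_top {x y : Fin 2} (hxy : x ≠ y)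
    {a b : FreeGroup (Fin 2)} (hgen : Subgroup.closure {a, b} = ⊤)
    (ha : IsConj (of x) a) (hb : IsConj (of y) b) :
    ∃ g, g⁻¹ * a * g = of x ∧ g⁻¹ * b * g = of y := by
  obtain ⟨u, rfl⟩ := isConj_iff.1 ha
  obtain ⟨v, rfl⟩ := isConj_iff.1 hb
  have hw : Subgroup.closure {of x, (u⁻¹ * v) * of y * (u⁻¹ * v)⁻¹} = ⊤ := by
    have hmap := congrArg (Subgroup.map (MulAut.conj u⁻¹).toMonoidHom) hgen
    rw [MonoidHom.map_closure, Set.image_pair,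
      Subgroup.map_top_of_surjective _ (MulAut.conj u⁻¹).surjective] at hmap
    convert hmap using 4 <;> simp only [MulEquiv.coe_toMonoidHom, MulAut.conj_apply] <;> group
  obtain ⟨m, n, hmn⟩ :=
    exists_eq_zpow_mul_zpow_of_mem_closure hxy (u⁻¹ * v).toWord isReduced_toWord
      (by rw [mk_toWord, hw]; exact Subgroup.mem_top _)
  rw [mk_toWord] at hmn
  have hv : v = u * (of x ^ m * of y ^ n) := by rw [← hmn, mul_inv_cancel_left]
  exact ⟨u * of x ^ m, by group, by rw [hv]; group⟩

end FreeGroup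

/-- Let `G` be the free group on two generators `α`, `β`.  If `α', β' ∈ G`
generate `G` and each of them is conjugate to `α` or to `β`, then the pair
`(α', β')` is weakly Hurwitz equivalent to `(α, β)`: some global conjugate of
`(α', β')` is obtained from `(α, β)` by a finite sequence of Hurwitz moves and
their inverses. -/
theorem free_group_pair_weakly_equivalent
    (α' β' : FreeGroup (Fin 2))
    (hgen : Subgroup.closure {α', β'} = (⊤ : Subgroup (FreeGroup (Fin 2))))
    (hα : IsConj (FreeGroup.of 0) α' ∨ IsConj (FreeGroup.of 1) α')
    (hβ : IsConj (FreeGroup.of 0) β' ∨ IsConj (FreeGroup.of 1) β') :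
    ∃ g : FreeGroup (Fin 2),
      Relation.ReflTransGen hurwitzStep
        (FreeGroup.of 0, FreeGroup.of 1) (g⁻¹ * α' * g, g⁻¹ * β' * g) := by
  rcases hα with hα | hα <;> rcases hβ with hβ | hβ
  · exact absurd hgen (FreeGroup.closure_pair_ne_top_of_isConj hα hβ)
  · obtain ⟨g, h1, h2⟩ := FreeGroup.exists_conj_eq_of_closure_eq_top (by decide) hgen hα hβ
    exact ⟨g, by rw [h1, h2]⟩
  · obtain ⟨g, h1, h2⟩ := FreeGroup.exists_conj_eq_of_closure_eq_top (by decide) hgen hα hβ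
    exact ⟨_, .single (hurwitzStep_conj_of_conj_eq_swap h1 h2)⟩
  · exact absurd hgen (FreeGroup.closure_pair_ne_top_of_isConj hα hβ)
end

section
/- In SL(2,ℤ), if an element g is a product of two Dehn twists (elements conjugate to R = [[1,0],[-1,1]], acting on row vectors from the right), then 2 − trace(g) is a perfect square. -/
/-- The standard negative Dehn twist matrix `R = [[1,0],[-1,1]]`. -/
def Rmat : SL2Z := ⟨!![1, 0; -1, 1], by simp [Matrix.det_fin_two_of]⟩

/-- A Dehn twist in `SL(2,ℤ)` is a conjugate of `R`. -/
def IsDehnTwist (t : SL2Z) : Prop := IsConj Rmat t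

/-! Conjugating `t₁ * t₂` by the conjugator of `t₁` brings it to the form `R * (u R u⁻¹)`, whose
trace a direct computation shows to be `2 - b²`, with `b` the upper right entry of `u`. -/

theorem IsConj.exists_mul_conj_isConj_mul {G : Type*} [Group G] {r s t₁ t₂ : G}
    (h₁ : IsConj r t₁) (h₂ : IsConj s t₂) : ∃ u : G, IsConj (r * (u * s * u⁻¹)) (t₁ * t₂) := by
  obtain ⟨c, rfl⟩ := isConj_iff.mp h₁
  obtain ⟨d, rfl⟩ := isConj_iff.mp h₂
  exact ⟨c⁻¹ * d, isConj_iff.mpr ⟨c, by group⟩⟩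

namespace Matrix.SpecialLinearGroup

theorem trace_eq_of_isConj {n R : Type*} [Fintype n] [DecidableEq n] [CommRing R]
    {a b : SpecialLinearGroup n R} (h : IsConj a b) :
    trace (a : Matrix n n R) = trace (b : Matrix n n R) := by
  obtain ⟨c, rfl⟩ := isConj_iff.mp h
  rw [coe_mul, coe_mul, trace_mul_cycle, ← coe_mul, inv_mul_cancel, coe_one, one_mul]

end Matrix.SpecialLinearGroup

theorem two_sub_trace_Rmat_mul_conj_Rmat (u : SL2Z) :
    2 - Matrix.trace ((Rmat * (u * Rmat * u⁻¹) : SL2Z) : Matrix (Fin 2) (Fin 2) ℤ)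
      = (u : Matrix (Fin 2) (Fin 2) ℤ) 0 1 ^ 2 := by
  have hdet := u.det_coe
  simp only [Matrix.SpecialLinearGroup.coe_mul, Matrix.SpecialLinearGroup.coe_inv]
  obtain ⟨a, b, c, d, hu⟩ : ∃ a b c d : ℤ, (u : Matrix (Fin 2) (Fin 2) ℤ) = !![a, b; c, d] :=
    ⟨_, _, _, _, Matrix.eta_fin_two _⟩
  rw [hu, Matrix.det_fin_two_of] at hdet
  simp only [hu, Rmat, Matrix.SpecialLinearGroup.coe_mk, Matrix.adjugate_fin_two_of,
    Matrix.mul_fin_two, Matrix.trace_fin_two_of, Matrix.of_apply, Matrix.cons_val', Matrix.cons_val_zero, Matrix.cons_val_one,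
    Matrix.empty_val', Matrix.cons_val_fin_one]
  linear_combination -2 * hdet

/-- If `g ∈ SL(2,ℤ)` is a product of two Dehn twists, then `2 - trace g` is a
perfect square. -/
theorem trace_of_product_of_two_dehn_twists (g : SL2Z)
    (h : ∃ t₁ t₂ : SL2Z, IsDehnTwist t₁ ∧ IsDehnTwist t₂ ∧ g = t₁ * t₂) :
    ∃ q : ℤ, 2 - Matrix.trace (g : Matrix (Fin 2) (Fin 2) ℤ) = q ^ 2 := by
  obtain ⟨t₁, t₂, h₁, h₂, rfl⟩ := h
  obtain ⟨u, hu⟩ := h₁.exists_mul_conj_isConj_mul h₂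
  exact ⟨(u : Matrix (Fin 2) (Fin 2) ℤ) 0 1, by
    rw [← Matrix.SpecialLinearGroup.trace_eq_of_isConj hu, two_sub_trace_Rmat_mul_conj_Rmat]⟩
end
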